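/- For all r ≥ 1, m̃_2(r) ≤ 2^{r−1} + 2^{⌊r/2⌋}: there exists an r-uniform hypergraph H with at most 2^{r−1} + 2^{⌊r/2⌋} edges and a 2-fold cover F of H with no F-coloring. -/

import Mathlib

open Finset

/-- The domain of a partial map `φ : X ⇀ Bool` (encoded as `X → Option Bool`). -/
def pdom {X : Type*} [Fintype X] (φ : X → Option Bool) : Finset X :=
  Finset.univ.filter (fun x => (φ x).isSome)

/-- A total function `f : X → Bool` extends the partial map `φ`. -/
def PExtends {X : Type*} (f : X → Bool) (φ : X → Option Bool) : Prop :=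
  ∀ x b, φ x = some b → f x = b

instance {X : Type*} [Fintype X] (f : X → Bool) : DecidablePred (PExtends f) :=
  fun φ => inferInstanceAs (Decidable (∀ x b, φ x = some b → f x = b))

/-- The weight of a family of partial maps: `∑ 2^{-|dom φ|}`. -/
noncomputable def weight {X : Type*} [Fintype X] (F : Finset (X → Option Bool)) : ℝ :=
  ∑ φ ∈ F, (1/2 : ℝ) ^ (pdom φ).card

/-- `F` is a 2-fold cover of the hypergraph `H`. -/
def IsCover {X : Type*} [Fintype X] (H : Finset (Finset X)) (F : Finset (X → Option Bool)) : Prop :=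
  (∀ φ ∈ F, pdom φ ∈ H) ∧
  (∀ φ ∈ F, ∀ ψ ∈ F, φ ≠ ψ → pdom φ = pdom ψ → ∀ x ∈ pdom φ, φ x ≠ ψ x)

/-!
A family of partial maps with pairwise distinct domains that every total map extends becomes an
uncolorable 2-fold cover after adding an apex vertex: each member `φ` is replaced by the two maps
`apex ↦ b, y ↦ φ y + b`. Such a family with `2 ^ n + 2 ^ c` domains of size `n = 2c` lives on
`ZMod n × Bool`. A total map `G` there is a cycle of maps `G (x, ·) : Bool → Bool`; the main
members, one per `s : ZMod n → Bool`, cover every `G` along which some state is carried around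
the cycle. The remaining `G` have bijective steps, an odd number of them negations. Splitting the
`n` positions into `c` pairs, the extra members cover such `G` by the same argument on a cycle of
length `c`; where that fails, `G (·, false)` is constant on every pair, contradicting the odd
parity. For even `r` one more vertex, whose value selects one of two copies, raises the edge size
by one and doubles the count.
-/

def IsUncolorable {X : Type*} (F : Finset (X → Option Bool)) : Prop :=
  ∀ f : X → Bool, ∃ φ ∈ F, PExtends f φ

def HasUncolorableOneFoldCover (X : Type*) [Fintype X] (k m : ℕ) : Prop :=
  ∃ S : Finset (X → Option Bool), Set.InjOn pdom (S : Set (X → Option Bool)) ∧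
    (∀ φ ∈ S, #(pdom φ) = k) ∧ #S ≤ m ∧ IsUncolorable S

def HasUncolorableTwoFoldCover (X : Type*) [Fintype X] (r m : ℕ) : Prop :=
  ∃ (H : Finset (Finset X)) (F : Finset (X → Option Bool)),
    (∀ e ∈ H, #e = r) ∧ #H ≤ m ∧ IsCover H F ∧ IsUncolorable F

lemma mem_pdom {X : Type*} [Fintype X] {φ : X → Option Bool} {x : X} :
    x ∈ pdom φ ↔ (φ x).isSome := by
  simp [pdom]

section CycleOrbit

variable {n : ℕ} (V : ZMod n → Bool → Bool)

def cycleOrbit (b : Bool) : ℕ → Bool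
  | 0 => b
  | t + 1 => V t (cycleOrbit b t)

variable {V}

lemma cycleOrbit_add_eq_of_eq {b b' : Bool} {t : ℕ} (h : cycleOrbit V b t = cycleOrbit V b' t)
    (k : ℕ) : cycleOrbit V b (t + k) = cycleOrbit V b' (t + k) := by
  induction k with
  | zero => exact h
  | succ k ih => exact congrArg (V _) ih

lemma cycleOrbit_eq_add_sum (hV : ∀ i x, V i x = x + V i false) (b : Bool) (t : ℕ) :
    cycleOrbit V b t = b + ∑ u ∈ range t, V u false := by
  induction t with
  | zero => simp [cycleOrbit]
  | succ t ih => rw [cycleOrbit, hV, ih, sum_range_succ, add_assoc]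

lemma cycleOrbit_periodic {b : Bool} (h : cycleOrbit V b n = b) :
    Function.Periodic (cycleOrbit V b) n := by
  intro t
  induction t with
  | zero => simpa [cycleOrbit] using h
  | succ t ih => simp [cycleOrbit, Nat.add_right_comm t 1 n, ih]

variable [NeZero n]

lemma sum_range_natCast_zmod {M : Type*} [AddCommMonoid M] (f : ZMod n → M) :
    ∑ u ∈ range n, f u = ∑ x, f x :=
  sum_nbij' (↑) ZMod.val (by simp) (by simp [ZMod.val_lt])
    (fun _ hu => ZMod.val_cast_of_lt (mem_range.1 hu)) (fun x _ => ZMod.natCast_zmod_val x)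
    (fun _ _ => rfl)

lemma exists_closed_orbit_of_cycleOrbit_eq {b : Bool} (h : cycleOrbit V b n = b) :
    ∃ s : ZMod n → Bool, ∀ x, V x (s x) = s (x + 1) := by
  have hs : ∀ t : ℕ, cycleOrbit V b (t : ZMod n).val = cycleOrbit V b t := fun t => by
    rw [ZMod.val_natCast, (cycleOrbit_periodic h).map_mod_nat]
  refine ⟨fun x => cycleOrbit V b x.val, fun x => ?_⟩
  obtain ⟨t, rfl⟩ : ∃ t : ℕ, (t : ZMod n) = x := ⟨x.val, ZMod.natCast_zmod_val x⟩
  simp only [← Nat.cast_succ, hs]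
  rfl

/-- `Bool` is a Boolean ring (`+` is `xor`), so the sum says that an odd number of the bijections
`V x` are the negation. -/
theorem exists_closed_orbit_or (V : ZMod n → Bool → Bool) :
    (∃ s : ZMod n → Bool, ∀ x, V x (s x) = s (x + 1)) ∨
      (∀ x, V x true ≠ V x false) ∧ ∑ x, V x false = true := by
  by_cases hfix : ∃ b, cycleOrbit V b n = b
  · obtain ⟨b, hb⟩ := hfix
    exact .inl (exists_closed_orbit_of_cycleOrbit_eq hb)
  push Not at hfix
  have hinj : ∀ x, V x true ≠ V x false := by
    intro x hx
    have hconst : ∀ a, V x a = V x false := by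
      intro a
      cases a
      · rfl
      · exact hx
    have hstep : cycleOrbit V true (x.val + 1) = cycleOrbit V false (x.val + 1) := by
      simp only [cycleOrbit, ZMod.natCast_zmod_val, hconst]
    have hagree := cycleOrbit_add_eq_of_eq hstep (n - (x.val + 1))
    rw [Nat.add_sub_cancel' (ZMod.val_lt x)] at hagree
    have := hfix true
    have := hfix false
    simp_all
  refine .inr ⟨hinj, ?_⟩
  have hV : ∀ x b, V x b = b + V x false := by
    intro x b
    cases b
    · exact (zero_add _).symm
    · have := hinj x
      revert this
      cases V x true <;> cases V x false <;> decide
  have := hfix false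
  rw [cycleOrbit_eq_add_sum hV, sum_range_natCast_zmod (fun x => V x false)] at this
  revert this
  cases ∑ x, V x false <;> decide

end CycleOrbit

section Design

variable {n c : ℕ} (ρ : ZMod n ≃ ZMod c × Bool)

def mainMap (s : ZMod n → Bool) (p : ZMod n × Bool) : Option Bool :=
  if s p.1 = p.2 then some (s (p.1 + 1)) else none

def extraMap (τ : ZMod c → Bool) (p : ZMod n × Bool) : Option Bool :=
  if τ (ρ p.1).1 = (ρ p.1).2 then some (τ (ρ p.1).1 + τ ((ρ p.1).1 + 1) + p.2) else none

lemma pextends_mainMap_iff {G : ZMod n × Bool → Bool} {s : ZMod n → Bool} :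
    PExtends G (mainMap s) ↔ ∀ x, G (x, s x) = s (x + 1) := by
  constructor
  · intro h x
    exact h (x, s x) _ (if_pos rfl)
  · rintro h ⟨x, v⟩ b hb
    simp only [mainMap, Option.ite_none_right_eq_some, Option.some.injEq] at hb
    obtain ⟨rfl, rfl⟩ := hb
    exact h x

lemma pextends_extraMap_iff {G : ZMod n × Bool → Bool} {τ : ZMod c → Bool} :
    PExtends G (extraMap ρ τ) ↔ ∀ i v, G (ρ.symm (i, τ i), v) = τ i + τ (i + 1) + v := by
  constructor
  · intro h i v
    exact h _ _ (by simp [extraMap])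
  · rintro h ⟨x, v⟩ b hb
    obtain ⟨⟨i, w⟩, rfl⟩ := ρ.symm.surjective x
    simp only [extraMap, Equiv.apply_symm_apply, Option.ite_none_right_eq_some,
      Option.some.injEq] at hb
    obtain ⟨rfl, rfl⟩ := hb
    exact h i v

variable [NeZero n]

lemma mem_pdom_mainMap {s : ZMod n → Bool} {p : ZMod n × Bool} :
    p ∈ pdom (mainMap s) ↔ s p.1 = p.2 := by
  simp [pdom, mainMap, apply_ite]

lemma mem_pdom_extraMap {τ : ZMod c → Bool} {p : ZMod n × Bool} :
    p ∈ pdom (extraMap ρ τ) ↔ τ (ρ p.1).1 = (ρ p.1).2 := by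
  simp [pdom, extraMap, apply_ite]

lemma card_pdom_mainMap (s : ZMod n → Bool) : #(pdom (mainMap s)) = n := by
  refine (card_nbij' (t := univ) Prod.fst (fun x => (x, s x)) (by simp)
    (by simp [mem_pdom_mainMap]) ?_ (fun _ _ => rfl)).trans (by simp)
  rintro ⟨x, v⟩ h
  simpa [mem_pdom_mainMap] using h

lemma mainMap_eq_of_pdom_eq {s s' : ZMod n → Bool} (h : pdom (mainMap s) = pdom (mainMap s')) :
    s = s' := by
  funext x
  have : (x, s x) ∈ pdom (mainMap s') := h ▸ mem_pdom_mainMap.2 rfl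
  exact (mem_pdom_mainMap.1 this).symm

lemma extraMap_eq_of_pdom_eq {τ τ' : ZMod c → Bool}
    (h : pdom (extraMap ρ τ) = pdom (extraMap ρ τ')) : τ = τ' := by
  funext i
  have : (ρ.symm (i, τ i), false) ∈ pdom (extraMap ρ τ') :=
    h ▸ (mem_pdom_extraMap ρ).2 (by simp)
  simpa [mem_pdom_extraMap, eq_comm] using this

/-- A main domain meets each fibre `{(x, false), (x, true)}` once, an extra domain contains
whole fibres. -/
lemma pdom_mainMap_ne_pdom_extraMap (s : ZMod n → Bool) (τ : ZMod c → Bool) :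
    pdom (mainMap s) ≠ pdom (extraMap ρ τ) := by
  intro h
  have hmem : ∀ v, (ρ.symm (0, τ 0), v) ∈ pdom (mainMap s) := fun v =>
    h ▸ (mem_pdom_extraMap ρ).2 (by simp)
  have h0 := mem_pdom_mainMap.1 (hmem false)
  have h1 := mem_pdom_mainMap.1 (hmem true)
  simp_all

variable [NeZero c]

lemma card_pdom_extraMap (τ : ZMod c → Bool) : #(pdom (extraMap ρ τ)) = n := by
  have hcard : #(univ : Finset (ZMod c × Bool)) = n := by
    rw [card_univ, ← Fintype.card_congr ρ, ZMod.card]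
  refine (card_nbij' (fun p => ((ρ p.1).1, p.2)) (fun q => (ρ.symm (q.1, τ q.1), q.2))
    (by simp) (by simp [mem_pdom_extraMap]) ?_ (fun _ _ => by simp)).trans hcard
  rintro ⟨x, v⟩ h
  obtain ⟨⟨i, w⟩, rfl⟩ := ρ.symm.surjective x
  simpa [mem_pdom_extraMap] using h

def cycleDesign : Finset (ZMod n × Bool → Option Bool) :=
  univ.image mainMap ∪ univ.image (extraMap ρ)

lemma injOn_pdom_cycleDesign :
    Set.InjOn pdom (cycleDesign ρ : Set (ZMod n × Bool → Option Bool)) := by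
  simp only [cycleDesign, coe_union, coe_image, coe_univ, Set.image_univ]
  rintro _ (⟨s, rfl⟩ | ⟨τ, rfl⟩) _ (⟨s', rfl⟩ | ⟨τ', rfl⟩) h
  · rw [mainMap_eq_of_pdom_eq h]
  · exact absurd h (pdom_mainMap_ne_pdom_extraMap ρ s τ')
  · exact absurd h.symm (pdom_mainMap_ne_pdom_extraMap ρ s' τ)
  · rw [extraMap_eq_of_pdom_eq ρ h]

lemma card_cycleDesign_le : #(cycleDesign ρ) ≤ 2 ^ n + 2 ^ c :=
  (card_union_le _ _).trans
    (add_le_add (card_image_le.trans (by simp)) (card_image_le.trans (by simp)))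

lemma isUncolorable_cycleDesign : IsUncolorable (cycleDesign ρ) := by
  intro G
  rcases exists_closed_orbit_or (fun x v => G (x, v)) with ⟨s, hs⟩ | ⟨hGinj, hGodd⟩
  · exact ⟨mainMap s, mem_union_left _ (mem_image_of_mem _ (mem_univ s)),
      pextends_mainMap_iff.2 hs⟩
  have hG : ∀ x v, G (x, v) = G (x, false) + v := by
    intro x v
    have := hGinj x
    revert this
    cases v <;> cases G (x, true) <;> cases G (x, false) <;> decide
  -- With the shift by `h`, a bijective step means `G (·, false)` is constant on that pair.
  rcases exists_closed_orbit_or (fun i h => G (ρ.symm (i, h), false) + h) with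
    ⟨τ, hτ⟩ | ⟨hWinj, -⟩
  · refine ⟨extraMap ρ τ, mem_union_right _ (mem_image_of_mem _ (mem_univ τ)),
      (pextends_extraMap_iff ρ).2 fun i v => ?_⟩
    rw [hG, ← hτ i]
    cases τ i <;> cases G (ρ.symm (i, _), false) <;> cases v <;> rfl
  have hpair : ∀ i, G (ρ.symm (i, true), false) = G (ρ.symm (i, false), false) := by
    intro i
    have := hWinj i
    revert this
    cases G (ρ.symm (i, true), false) <;> cases G (ρ.symm (i, false), false) <;> decide
  have heven : ∑ x, G (x, false) = 0 := by
    rw [← ρ.symm.sum_comp, Fintype.sum_prod_type]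
    simp [hpair, BooleanRing.add_self]
  exact absurd (heven.symm.trans hGodd) (by decide)

end Design

theorem hasUncolorableOneFoldCover_zmod {n c : ℕ} [NeZero n] [NeZero c]
    (ρ : ZMod n ≃ ZMod c × Bool) :
    HasUncolorableOneFoldCover (ZMod n × Bool) n (2 ^ n + 2 ^ c) := by
  refine ⟨cycleDesign ρ, injOn_pdom_cycleDesign ρ, ?_, card_cycleDesign_le ρ,
    isUncolorable_cycleDesign ρ⟩
  simp only [cycleDesign, mem_union, mem_image, mem_univ, true_and]
  rintro _ (⟨s, rfl⟩ | ⟨τ, rfl⟩)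
  exacts [card_pdom_mainMap s, card_pdom_extraMap ρ τ]

section Extensions

variable {Y : Type*} [Fintype Y]

lemma hasUncolorableOneFoldCover_zero {m : ℕ} (hm : 0 < m) :
    HasUncolorableOneFoldCover Y 0 m := by
  refine ⟨{fun _ => none}, by simp, by simp [pdom], by simpa, fun f => ?_⟩
  exact ⟨_, mem_singleton_self _, by simp [PExtends]⟩

def signedCone (φ : Y → Option Bool) (b : Bool) : Option Y → Option Bool
  | none => some b
  | some y => (φ y).map (· + b)

lemma pdom_signedCone (φ : Y → Option Bool) (b : Bool) :
    pdom (signedCone φ b) = (pdom φ).insertNone := by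
  ext (_ | y) <;> simp [mem_pdom, signedCone]

def switchMap (φ : Y → Option Bool) (κ : Bool) : Option (Bool × Y) → Option Bool
  | none => some κ
  | some (κ', y) => if κ' = κ then φ y else none

lemma pdom_switchMap (φ : Y → Option Bool) (κ : Bool) :
    pdom (switchMap φ κ) = ((pdom φ).map (Function.Embedding.sectR κ Y)).insertNone := by
  ext (_ | ⟨κ', y⟩)
  · simp [mem_pdom, switchMap]
  · simp only [some_mem_insertNone, mem_map, Function.Embedding.sectR_apply, Prod.mk.injEq,
      mem_pdom, switchMap]
    by_cases h : κ' = κ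
    · simp [h]
    · simp [h, Ne.symm h]

theorem HasUncolorableOneFoldCover.optionProd {k m : ℕ} (h : HasUncolorableOneFoldCover Y k m)
    (hk : 0 < k) : HasUncolorableOneFoldCover (Option (Bool × Y)) (k + 1) (2 * m) := by
  obtain ⟨S, hinj, hkS, hm, hS⟩ := h
  refine ⟨(S ×ˢ univ).image fun p => switchMap p.1 p.2, ?_, ?_, ?_, ?_⟩
  · simp only [coe_image, coe_product, coe_univ, Set.prod_univ]
    rintro _ ⟨⟨φ, κ⟩, hφ, rfl⟩ _ ⟨⟨ψ, κ'⟩, hψ, rfl⟩ hdom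
    simp only [Set.mem_preimage, mem_coe] at hφ hψ
    rw [pdom_switchMap, pdom_switchMap, insertNone.injective.eq_iff] at hdom
    obtain ⟨y, hy⟩ : (pdom φ).Nonempty := card_pos.1 (hkS φ hφ ▸ hk)
    obtain ⟨y', -, hyy'⟩ :=
      mem_map.1 (hdom ▸ mem_map_of_mem (Function.Embedding.sectR κ Y) hy)
    obtain rfl : κ' = κ := congrArg Prod.fst hyy'
    rw [hinj hφ hψ (map_injective _ hdom)]
  · simp only [mem_image, mem_product, mem_univ, and_true, Prod.exists]
    rintro _ ⟨φ, κ, hφ, rfl⟩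
    rw [pdom_switchMap, card_insertNone, card_map, hkS φ hφ]
  · refine card_image_le.trans ?_
    rw [card_product, card_univ, Fintype.card_bool]
    omega
  · intro f
    obtain ⟨φ, hφ, hext⟩ := hS fun y => f (some (f none, y))
    refine ⟨switchMap φ (f none),
      mem_image.2 ⟨(φ, f none), mem_product.2 ⟨hφ, mem_univ _⟩, rfl⟩, ?_⟩
    rintro (_ | ⟨κ', y⟩) b hb
    · simpa [switchMap] using hb
    · by_cases h : κ' = f none
      · simp only [switchMap, h, if_true] at hb
        rw [h]
        exact hext y b hb
      · simp [switchMap, h] at hb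

variable [DecidableEq Y]

theorem HasUncolorableOneFoldCover.twoFold {k m : ℕ} (h : HasUncolorableOneFoldCover Y k m) :
    HasUncolorableTwoFoldCover (Option Y) (k + 1) m := by
  obtain ⟨S, hinj, hk, hm, hS⟩ := h
  refine ⟨S.image fun φ => (pdom φ).insertNone, (S ×ˢ univ).image fun p => signedCone p.1 p.2,
    ?_, card_image_le.trans hm, ⟨?_, ?_⟩, ?_⟩
  · simp only [mem_image]
    rintro _ ⟨φ, hφ, rfl⟩
    rw [card_insertNone, hk φ hφ]
  · simp only [mem_image, mem_product, mem_univ, and_true, Prod.exists]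
    rintro _ ⟨φ, b, hφ, rfl⟩
    exact ⟨φ, hφ, (pdom_signedCone φ b).symm⟩
  · simp only [mem_image, mem_product, mem_univ, and_true, Prod.exists]
    rintro _ ⟨φ, b, hφ, rfl⟩ _ ⟨ψ, b', hψ, rfl⟩ hne hdom
    rw [pdom_signedCone, pdom_signedCone] at hdom
    obtain rfl := hinj hφ hψ (insertNone.injective hdom)
    have hb : b ≠ b' := fun hb => hne (hb ▸ rfl)
    rintro (_ | y) hy
    · simpa [signedCone] using hb
    · rw [pdom_signedCone, some_mem_insertNone, mem_pdom, Option.isSome_iff_exists] at hy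
      obtain ⟨a, ha⟩ := hy
      simpa [signedCone, ha] using hb
  · intro f
    obtain ⟨φ, hφ, hext⟩ := hS fun y => f (some y) + f none
    refine ⟨signedCone φ (f none),
      mem_image.2 ⟨(φ, f none), mem_product.2 ⟨hφ, mem_univ _⟩, rfl⟩, ?_⟩
    rintro (_ | y) b hb
    · simpa [signedCone] using hb
    · simp only [signedCone, Option.map_eq_some_iff] at hb
      obtain ⟨a, ha, rfl⟩ := hb
      rw [← hext y a ha, add_assoc, BooleanRing.add_self, add_zero]

end Extensions

lemma HasUncolorableTwoFoldCover.mono {X : Type*} [Fintype X] {r m m' : ℕ}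
    (h : HasUncolorableTwoFoldCover X r m) (hm : m ≤ m') : HasUncolorableTwoFoldCover X r m' :=
  let ⟨H, F, hr, hH, hF⟩ := h
  ⟨H, F, hr, hH.trans hm, hF⟩

lemma pdom_comp_symm {X Y : Type*} [Fintype X] [Fintype Y] (e : X ≃ Y) (φ : X → Option Bool) :
    pdom (φ ∘ e.symm) = (pdom φ).map e.toEmbedding := by
  ext y
  obtain ⟨x, rfl⟩ := e.surjective y
  simp [mem_pdom]

theorem HasUncolorableTwoFoldCover.of_equiv {X Y : Type*} [Fintype X] [Fintype Y]
    [DecidableEq Y] {r m : ℕ} (e : X ≃ Y) (h : HasUncolorableTwoFoldCover X r m) :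
    HasUncolorableTwoFoldCover Y r m := by
  obtain ⟨H, F, hr, hH, ⟨hdom, hdisj⟩, hF⟩ := h
  refine ⟨H.image (·.map e.toEmbedding), F.image (· ∘ e.symm), ?_, card_image_le.trans hH,
    ⟨?_, ?_⟩, fun f => ?_⟩
  · simp only [mem_image]
    rintro _ ⟨s, hs, rfl⟩
    rw [card_map, hr s hs]
  · simp only [mem_image]
    rintro _ ⟨φ, hφ, rfl⟩
    exact ⟨pdom φ, hdom φ hφ, (pdom_comp_symm e φ).symm⟩
  · simp only [mem_image]
    rintro _ ⟨φ, hφ, rfl⟩ _ ⟨ψ, hψ, rfl⟩ hne hpd y hy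
    rw [pdom_comp_symm, pdom_comp_symm, map_inj] at hpd
    rw [pdom_comp_symm, mem_map_equiv] at hy
    exact hdisj φ hφ ψ hψ (fun h => hne (h ▸ rfl)) hpd _ hy
  · obtain ⟨φ, hφ, hext⟩ := hF (f ∘ e)
    refine ⟨φ ∘ e.symm, mem_image_of_mem _ hφ, fun y b hb => ?_⟩
    simpa using hext (e.symm y) b hb

theorem hasUncolorableTwoFoldCover_triangle : HasUncolorableTwoFoldCover (Fin 3) 2 3 := by
  refine ⟨{{0, 1}, {0, 2}, {1, 2}},
    {![some false, some false, none], ![some true, some true, none],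
     ![some false, none, some true], ![some true, none, some false],
     ![none, some false, some true], ![none, some true, some false]},
    by decide, by decide, ⟨by decide, by decide⟩, ?_⟩
  unfold IsUncolorable
  decide

theorem exists_hasUncolorableOneFoldCover (c : ℕ) :
    ∃ (Y : Type) (_ : Fintype Y) (_ : DecidableEq Y),
      HasUncolorableOneFoldCover Y (2 * c) (2 ^ (2 * c) + 2 ^ c) := by
  obtain rfl | hc := eq_or_ne c 0
  · exact ⟨Unit, _, inferInstance, hasUncolorableOneFoldCover_zero (by norm_num)⟩
  have : NeZero c := ⟨hc⟩
  let ρ : ZMod (2 * c) ≃ ZMod c × Bool :=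
    Fintype.equivOfCardEq (by simp [ZMod.card, mul_comm])
  exact ⟨_, _, inferInstance, hasUncolorableOneFoldCover_zmod ρ⟩

theorem stmt_19 (r : ℕ) (hr : 1 ≤ r) :
    ∃ (n : ℕ) (H : Finset (Finset (Fin n))) (F : Finset (Fin n → Option Bool)),
      (∀ e ∈ H, e.card = r) ∧ H.card ≤ 2 ^ (r - 1) + 2 ^ (r / 2) ∧ IsCover H F ∧
      (∀ f : Fin n → Bool, ∃ φ ∈ F, PExtends f φ) := by
  suffices ∃ (X : Type) (_ : Fintype X),
      HasUncolorableTwoFoldCover X r (2 ^ (r - 1) + 2 ^ (r / 2)) by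
    obtain ⟨X, _, h⟩ := this
    exact ⟨_, h.of_equiv (Fintype.equivFin X)⟩
  obtain ⟨c, rfl | rfl⟩ := Nat.even_or_odd' r
  · obtain ⟨d, rfl⟩ : ∃ d, c = d + 1 := Nat.exists_eq_succ_of_ne_zero (by omega)
    obtain rfl | hd := eq_or_ne d 0
    · exact ⟨_, _, hasUncolorableTwoFoldCover_triangle.mono (by norm_num)⟩
    obtain ⟨Y, _, _, hY⟩ := exists_hasUncolorableOneFoldCover d
    have h := (hY.optionProd (by omega)).twoFold
    rw [show 2 * d + 1 + 1 = 2 * (d + 1) by ring] at h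
    refine ⟨_, _, h.mono (le_of_eq ?_)⟩
    rw [show 2 * (d + 1) - 1 = 2 * d + 1 by omega, show 2 * (d + 1) / 2 = d + 1 by omega]
    ring
  · obtain ⟨Y, _, _, hY⟩ := exists_hasUncolorableOneFoldCover c
    rw [show (2 * c + 1) - 1 = 2 * c by omega, show (2 * c + 1) / 2 = c by omega]
    exact ⟨_, _, hY.twoFold⟩
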